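/- arXiv:1405.6374 — 8 statements merged into one kernel-verified Lean document; each statement's English description precedes it below -/
import Mathlib

section
/- If the QMS is irreducible, then its invariant state is unique: whenever ρ₁ and ρ₂ are positive semidefinite matrices of trace 1 with 𝓛_*(ρ₁) = 0 and 𝓛_*(ρ₂) = 0, one has ρ₁ = ρ₂. -/
/-!
The kernel of an invariant `ρ ≥ 0` is invariant under `Gᴴ` and the `(L ℓ)ᴴ`, so its orthogonal
complement, which contains the range of `ρ`, is invariant under `G` and the `L ℓ`; irreducibility
therefore makes every nonzero invariant `ρ ≥ 0` invertible. For two invariant states, take the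
largest `t` with `ρ₁ - t • ρ₂ ≥ 0`: this matrix is invariant, positive and singular, hence zero,
and comparing traces gives `t = 1`.
-/

open Matrix
open scoped ComplexOrder MatrixOrder

section

variable {A : Type*} [PartialOrder A] [Ring A] [StarRing A] [TopologicalSpace A]
  [StarOrderedRing A] [Algebra ℝ A] [ContinuousFunctionalCalculus ℝ A IsSelfAdjoint]
  [NonnegSpectrumClass ℝ A] [IsSemitopologicalRing A] [T2Space A] [Nontrivial A]

/-- With `s = √b`, take `t` the least point of the spectrum of `s⁻¹ a s⁻¹`; then
`a - t • b = s (s⁻¹ a s⁻¹ - t) s`. -/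
theorem exists_nonneg_sub_smul_not_isUnit {a b : A} (ha : IsSelfAdjoint a) (hb : 0 ≤ b)
    (hb_unit : IsUnit b) : ∃ t : ℝ, 0 ≤ a - t • b ∧ ¬IsUnit (a - t • b) := by
  obtain ⟨u, hu⟩ : IsUnit (CFC.sqrt b) := (CFC.isUnit_sqrt_iff b).mpr hb_unit
  have hu_star : star (u : A) = u := hu ▸ (CFC.sqrt_nonneg b).isSelfAdjoint
  have hu_sq : (u : A) * u = b := hu ▸ CFC.sqrt_mul_sqrt_self b
  set c := star (↑u⁻¹ : A) * a * ↑u⁻¹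
  have hc : IsSelfAdjoint c := ha.conjugate' _
  obtain ⟨t, ht, ht_min⟩ := (ContinuousFunctionalCalculus.isCompact_spectrum (R := ℝ)
    (p := IsSelfAdjoint) c).exists_isLeast (ContinuousFunctionalCalculus.spectrum_nonempty c hc)
  have hct : 0 ≤ c - algebraMap ℝ A t :=
    sub_nonneg.mpr ((algebraMap_le_iff_le_spectrum hc).mpr ht_min)
  have hconj : a - t • b = star (u : A) * (c - algebraMap ℝ A t) * u := by
    have hc_conj : star (u : A) * c * u = a := by
      rw [← mul_assoc, ← mul_assoc, ← star_mul, Units.inv_mul, star_one, one_mul, mul_assoc,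
        Units.inv_mul, mul_one]
    rw [mul_sub, sub_mul, hc_conj, Algebra.algebraMap_eq_smul_one, mul_smul_comm, smul_mul_assoc,
      mul_one, hu_star, hu_sq]
  refine ⟨t, hconj ▸ star_left_conjugate_nonneg hct u, fun hunit => ?_⟩
  rw [hconj, hu_star, Units.isUnit_mul_units, Units.isUnit_units_mul] at hunit
  exact spectrum.mem_iff.mp ht (by simpa using hunit.neg)

end

namespace Matrix

variable {𝕜 n : Type*} [RCLike 𝕜] [Fintype n]

theorem star_dotProduct_mulVec_conjTranspose (M : Matrix n n 𝕜) (k v : n → 𝕜) :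
    star k ⬝ᵥ (M *ᵥ v) = star (Mᴴ *ᵥ k) ⬝ᵥ v := by
  rw [dotProduct_mulVec, star_mulVec, conjTranspose_conjTranspose]

theorem star_dotProduct_conj_mulVec (M ρ : Matrix n n 𝕜) (k : n → 𝕜) :
    star k ⬝ᵥ ((M * ρ * Mᴴ) *ᵥ k) = star (Mᴴ *ᵥ k) ⬝ᵥ (ρ *ᵥ (Mᴴ *ᵥ k)) := by
  rw [← mulVec_mulVec, ← mulVec_mulVec, star_dotProduct_mulVec_conjTranspose]

def dotOrthogonal (W : Submodule 𝕜 (n → 𝕜)) : Submodule 𝕜 (n → 𝕜) where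
  carrier := {v | ∀ k ∈ W, star k ⬝ᵥ v = 0}
  add_mem' {v w} hv hw k hk := by rw [dotProduct_add, hv k hk, hw k hk, add_zero]
  zero_mem' _ _ := dotProduct_zero _
  smul_mem' c v hv k hk := by rw [dotProduct_smul, hv k hk, smul_zero]

theorem mulVec_mem_dotOrthogonal {W : Submodule 𝕜 (n → 𝕜)} {M : Matrix n n 𝕜}
    (hW : ∀ k ∈ W, Mᴴ *ᵥ k ∈ W) {v : n → 𝕜} (hv : v ∈ dotOrthogonal W) :
    M *ᵥ v ∈ dotOrthogonal W := fun k hk => by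
  rw [star_dotProduct_mulVec_conjTranspose]
  exact hv _ (hW k hk)

theorem eq_bot_of_dotOrthogonal_eq_top {W : Submodule 𝕜 (n → 𝕜)} (hW : dotOrthogonal W = ⊤) :
    W = ⊥ :=
  (Submodule.eq_bot_iff W).mpr fun k hk =>
    dotProduct_star_self_eq_zero.mp ((hW ▸ Submodule.mem_top : k ∈ dotOrthogonal W) k hk)

theorem IsHermitian.mulVec_mem_dotOrthogonal_ker {A : Matrix n n 𝕜} (hA : A.IsHermitian)
    (v : n → 𝕜) : A *ᵥ v ∈ dotOrthogonal (LinearMap.ker A.mulVecLin) := fun k hk => by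
  rw [star_dotProduct_mulVec_conjTranspose, hA.eq, show A *ᵥ k = 0 from hk, star_zero,
    zero_dotProduct]

end Matrix

namespace GKSL

variable {𝕜 n ι : Type*} [RCLike 𝕜] [Fintype n] [Fintype ι]

def predual (G : Matrix n n 𝕜) (L : ι → Matrix n n 𝕜) : Matrix n n 𝕜 →ₗ[𝕜] Matrix n n 𝕜 where
  toFun ρ := G * ρ + ∑ ℓ, L ℓ * ρ * (L ℓ)ᴴ + ρ * Gᴴ
  map_add' ρ σ := by
    simp only [Matrix.mul_add, Matrix.add_mul, Finset.sum_add_distrib]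
    abel
  map_smul' c ρ := by
    simp only [Matrix.mul_smul, Matrix.smul_mul, ← Finset.smul_sum, smul_add, RingHom.id_apply]

theorem predual_apply (G : Matrix n n 𝕜) (L : ι → Matrix n n 𝕜) (ρ : Matrix n n 𝕜) :
    predual G L ρ = G * ρ + ∑ ℓ, L ℓ * ρ * (L ℓ)ᴴ + ρ * Gᴴ :=
  rfl

def IsIrreducible (G : Matrix n n 𝕜) (L : ι → Matrix n n 𝕜) : Prop :=
  ∀ V : Submodule 𝕜 (n → 𝕜),
    (∀ v ∈ V, G *ᵥ v ∈ V) → (∀ ℓ, ∀ v ∈ V, L ℓ *ᵥ v ∈ V) → V = ⊥ ∨ V = ⊤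

variable {G : Matrix n n 𝕜} {L : ι → Matrix n n 𝕜} {ρ : Matrix n n 𝕜}

theorem conjTranspose_jump_mulVec_mem_ker (hρ : ρ.PosSemidef) (hinv : predual G L ρ = 0)
    {k : n → 𝕜} (hk : k ∈ LinearMap.ker ρ.mulVecLin) (ℓ : ι) :
    (L ℓ)ᴴ *ᵥ k ∈ LinearMap.ker ρ.mulVecLin := by
  have hρk : ρ *ᵥ k = 0 := hk
  have hsum : ∑ j, star ((L j)ᴴ *ᵥ k) ⬝ᵥ (ρ *ᵥ ((L j)ᴴ *ᵥ k)) = 0 := by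
    have h := congrArg (fun M => star k ⬝ᵥ (M *ᵥ k)) hinv
    simp only [predual_apply, add_mulVec, sum_mulVec, dotProduct_add, dotProduct_sum,
      star_dotProduct_conj_mulVec, zero_mulVec, dotProduct_zero] at h
    rwa [← mulVec_mulVec, hρk, mulVec_zero, dotProduct_zero, zero_add, ← mulVec_mulVec,
      star_dotProduct_mulVec_conjTranspose, hρ.isHermitian.eq, hρk, star_zero, zero_dotProduct,
      add_zero] at h
  have hterm := (Finset.sum_eq_zero_iff_of_nonneg fun j _ =>
    hρ.dotProduct_mulVec_nonneg ((L j)ᴴ *ᵥ k)).mp hsum ℓ (Finset.mem_univ ℓ)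
  exact (hρ.dotProduct_mulVec_zero_iff _).mp hterm

theorem conjTranspose_mulVec_mem_ker (hρ : ρ.PosSemidef) (hinv : predual G L ρ = 0)
    {k : n → 𝕜} (hk : k ∈ LinearMap.ker ρ.mulVecLin) :
    Gᴴ *ᵥ k ∈ LinearMap.ker ρ.mulVecLin := by
  have hρk : ρ *ᵥ k = 0 := hk
  have hjumps : ∑ ℓ, (L ℓ * ρ * (L ℓ)ᴴ) *ᵥ k = 0 := Finset.sum_eq_zero fun ℓ _ => by
    rw [← mulVec_mulVec, ← mulVec_mulVec,
      show ρ *ᵥ ((L ℓ)ᴴ *ᵥ k) = 0 from conjTranspose_jump_mulVec_mem_ker hρ hinv hk ℓ,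
      mulVec_zero]
  have h : predual G L ρ *ᵥ k = 0 := by rw [hinv, zero_mulVec]
  rwa [predual_apply, add_mulVec, add_mulVec, sum_mulVec, hjumps, ← mulVec_mulVec, hρk,
    mulVec_zero, zero_add, zero_add, ← mulVec_mulVec] at h

theorem isUnit_of_predual_eq_zero [DecidableEq n] (hirr : IsIrreducible G L)
    (hρ : ρ.PosSemidef) (hinv : predual G L ρ = 0) (hρ0 : ρ ≠ 0) : IsUnit ρ := by
  rcases hirr (dotOrthogonal (LinearMap.ker ρ.mulVecLin))
      (fun _ => mulVec_mem_dotOrthogonal fun _ => conjTranspose_mulVec_mem_ker hρ hinv)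
      (fun ℓ _ => mulVec_mem_dotOrthogonal fun _ hk =>
        conjTranspose_jump_mulVec_mem_ker hρ hinv hk ℓ)
    with hbot | htop
  · refine absurd (ext_of_mulVec_single fun j => ?_) hρ0
    rw [zero_mulVec, ← Submodule.mem_bot 𝕜, ← hbot]
    exact hρ.isHermitian.mulVec_mem_dotOrthogonal_ker _
  · exact mulVec_injective_iff_isUnit.mp
      (LinearMap.ker_eq_bot.mp (eq_bot_of_dotOrthogonal_eq_top htop))

end GKSL

theorem irreducible_invariant_state_unique_general {d m : ℕ} (hd : 1 ≤ d)
    (L : Fin m → Matrix (Fin d) (Fin d) ℂ) (G : Matrix (Fin d) (Fin d) ℂ)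
    (hirr : ∀ V : Submodule ℂ (Fin d → ℂ),
      (∀ v ∈ V, G *ᵥ v ∈ V) → (∀ ℓ, ∀ v ∈ V, L ℓ *ᵥ v ∈ V) → V = ⊥ ∨ V = ⊤)
    (ρ₁ ρ₂ : Matrix (Fin d) (Fin d) ℂ)
    (h₁pos : ρ₁.PosSemidef) (h₁tr : ρ₁.trace = 1)
    (h₁inv : G * ρ₁ + ∑ ℓ, L ℓ * ρ₁ * (L ℓ)ᴴ + ρ₁ * Gᴴ = 0)
    (h₂pos : ρ₂.PosSemidef) (h₂tr : ρ₂.trace = 1)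
    (h₂inv : G * ρ₂ + ∑ ℓ, L ℓ * ρ₂ * (L ℓ)ᴴ + ρ₂ * Gᴴ = 0) :
    ρ₁ = ρ₂ := by
  have : Nonempty (Fin d) := ⟨⟨0, hd⟩⟩
  have hρ₂ : IsUnit ρ₂ :=
    GKSL.isUnit_of_predual_eq_zero hirr h₂pos h₂inv (by rintro rfl; simp at h₂tr)
  obtain ⟨t, hσ_nonneg, hσ_not_unit⟩ :=
    exists_nonneg_sub_smul_not_isUnit h₁pos.isHermitian h₂pos.nonneg hρ₂
  have hσ_inv : GKSL.predual G L (ρ₁ - t • ρ₂) = 0 := by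
    rw [map_sub, LinearMap.map_smul_of_tower]
    simp only [GKSL.predual_apply, h₁inv, h₂inv, smul_zero, sub_zero]
  have hσ : ρ₁ - t • ρ₂ = 0 := by
    by_contra hσ_ne
    exact hσ_not_unit (GKSL.isUnit_of_predual_eq_zero hirr
      (nonneg_iff_posSemidef.mp hσ_nonneg) hσ_inv hσ_ne)
  have ht : t = 1 := by
    have htr := congrArg trace hσ
    rw [trace_sub, trace_smul, h₁tr, h₂tr, trace_zero, sub_eq_zero] at htr
    exact_mod_cast (by simpa using htr.symm : (t : ℂ) = 1)
  rwa [ht, one_smul, sub_eq_zero] at hσ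

/-- an irreducible QMS has a unique invariant state: if the only
subspaces of `ℂ^d` invariant under `G` and every `L ℓ` are `{0}` and `ℂ^d`, and
`ρ₁, ρ₂` are positive semidefinite matrices of trace `1` with `𝓛_*(ρᵢ) = 0`,
then `ρ₁ = ρ₂`. -/
theorem irreducible_invariant_state_unique {d m : ℕ} (hd : 1 ≤ d) (hm : 1 ≤ m)
    (H : Matrix (Fin d) (Fin d) ℂ) (hH : H.IsHermitian)
    (L : Fin m → Matrix (Fin d) (Fin d) ℂ) (G : Matrix (Fin d) (Fin d) ℂ)
    (hG : G = (-(1/2 : ℂ)) • ∑ ℓ, (L ℓ)ᴴ * L ℓ - Complex.I • H)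
    (hirr : ∀ V : Submodule ℂ (Fin d → ℂ),
      (∀ v ∈ V, G *ᵥ v ∈ V) → (∀ ℓ, ∀ v ∈ V, L ℓ *ᵥ v ∈ V) → V = ⊥ ∨ V = ⊤)
    (ρ₁ ρ₂ : Matrix (Fin d) (Fin d) ℂ)
    (h₁pos : ρ₁.PosSemidef) (h₁tr : ρ₁.trace = 1)
    (h₁inv : G * ρ₁ + ∑ ℓ, L ℓ * ρ₁ * (L ℓ)ᴴ + ρ₁ * Gᴴ = 0)
    (h₂pos : ρ₂.PosSemidef) (h₂tr : ρ₂.trace = 1)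
    (h₂inv : G * ρ₂ + ∑ ℓ, L ℓ * ρ₂ * (L ℓ)ᴴ + ρ₂ * Gᴴ = 0) :
    ρ₁ = ρ₂ :=
  irreducible_invariant_state_unique_general hd L G hirr ρ₁ ρ₂ h₁pos h₁tr h₁inv h₂pos h₂tr h₂inv
end

section
/- If the QMS admits a positive definite matrix ρ of trace 1 with 𝓛_*(ρ) = 0, then every fixed point belongs to the decoherence free algebra: if x ∈ M_d(ℂ) satisfies T_t(x) = x for all t ≥ 0, then T_t(x*x) = x*x for all t ≥ 0. -/
/-! A fixed point `x` of the semigroup lies in the kernel of `𝓛`, and so does `x*`, because `𝓛`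
commutes with the adjoint. Then `𝓛(x* x)` equals the dissipation
`D(x*, x) = ∑ ℓ [x, L ℓ]* [x, L ℓ]`, a positive semidefinite matrix. Since `𝓛_*(ρ) = 0`, trace
duality gives `tr(ρ 𝓛(y)) = tr(𝓛_*(ρ) y) = 0` for every `y`, so `tr(ρ D(x*, x)) = 0`, and
faithfulness of `ρ` forces `D(x*, x) = 0`. Hence `𝓛(x* x) = 0`, and `x* x` is fixed by every
`exp(t 𝓛)`. -/

open Matrix
open scoped ComplexOrder

attribute [local instance] Matrix.normedAddCommGroup Matrix.normedSpace

/-- The GKSL generator `𝓛(x) = G* x + ∑ ℓ, (L ℓ)* x L ℓ + x G`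
as a continuous linear endomorphism of `M_d(ℂ)`. -/
noncomputable def gkslGen {d m : ℕ} (G : Matrix (Fin d) (Fin d) ℂ)
    (L : Fin m → Matrix (Fin d) (Fin d) ℂ) :
    Matrix (Fin d) (Fin d) ℂ →L[ℂ] Matrix (Fin d) (Fin d) ℂ :=
  LinearMap.toContinuousLinearMap
    (LinearMap.mulLeft ℂ Gᴴ
      + ∑ ℓ, (LinearMap.mulLeft ℂ (L ℓ)ᴴ).comp (LinearMap.mulRight ℂ (L ℓ))
      + LinearMap.mulRight ℂ G)

instance matrixCLM_isTopologicalRing {d : ℕ} :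
    IsTopologicalRing (Matrix (Fin d) (Fin d) ℂ →L[ℂ] Matrix (Fin d) (Fin d) ℂ) :=
  @NonUnitalSeminormedRing.toIsTopologicalRing _
    (@ContinuousLinearMap.toSeminormedRing ℂ (Matrix (Fin d) (Fin d) ℂ) _ _
      Matrix.normedSpace).toNonUnitalSeminormedRing

section Semigroup

variable {E : Type*} [NormedAddCommGroup E] [NormedSpace ℂ E] [CompleteSpace E]

theorem NormedSpace.exp_smul_apply_eq_self_of_apply_eq_zero {A : E →L[ℂ] E} {y : E} (c : ℂ)
    (hy : A y = 0) : NormedSpace.exp (c • A) y = y := by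
  have hterms : ∀ n ≠ 0, ((n.factorial : ℂ)⁻¹ • (c • A) ^ n) y = 0 := by
    rintro (_ | n) hn
    · exact absurd rfl hn
    · rw [_root_.smul_apply, pow_succ, mul_apply_eq_comp, _root_.smul_apply, hy, smul_zero,
        map_zero, smul_zero]
  have hsum := (NormedSpace.exp_series_hasSum_exp' (𝕂 := ℂ) (c • A)).mapL
    (ContinuousLinearMap.apply ℂ E y)
  simpa using hsum.unique (hasSum_single 0 hterms)

theorem apply_eq_zero_of_forall_exp_smul_apply_eq_self {A : E →L[ℂ] E} {x : E}
    (hx : ∀ t : ℝ, 0 ≤ t → NormedSpace.exp ((t : ℂ) • A) x = x) : A x = 0 := by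
  -- differentiate at the interior point `t = 1`, where the derivative is `A (exp A x) = A x`
  have hderiv : HasDerivAt (fun t : ℝ => NormedSpace.exp ((t : ℂ) • A) x) (A x) 1 := by
    have h := ((hasDerivAt_exp_smul_const' A (1 : ℂ)).clm_apply (hasDerivAt_const _ x)).scomp
      (1 : ℝ) Complex.ofRealCLM.hasDerivAt
    convert h using 1
    · rfl
    have hx1 : NormedSpace.exp ((1 : ℂ) • A) x = x := by exact_mod_cast hx 1 zero_le_one
    rw [map_zero, add_zero, Complex.ofRealCLM_apply, Complex.ofReal_one, one_smul,
      mul_apply_eq_comp, hx1]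
  have hconst : (fun t : ℝ => NormedSpace.exp ((t : ℂ) • A) x) =ᶠ[nhds 1] fun _ => x :=
    Filter.eventually_of_mem (Ioi_mem_nhds zero_lt_one) fun t ht => hx t (le_of_lt ht)
  exact hderiv.unique ((hasDerivAt_const 1 x).congr_of_eventuallyEq hconst)

end Semigroup

section PositiveDefinite

variable {𝕜 n : Type*} [RCLike 𝕜] [Fintype n] [DecidableEq n]

open scoped MatrixOrder in
theorem Matrix.PosDef.eq_zero_of_trace_mul_eq_zero {ρ S : Matrix n n 𝕜} (hρ : ρ.PosDef)
    (hS : S.PosSemidef) (h : (ρ * S).trace = 0) : S = 0 := by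
  obtain ⟨y, hy, rfl⟩ := CStarAlgebra.isStrictlyPositive_iff_eq_star_mul_self.mp
    hρ.isStrictlyPositive
  have hconj : y * S * yᴴ = 0 := by
    rw [← (hS.mul_mul_conjTranspose_same y).trace_eq_zero_iff, trace_mul_cycle, ← h,
      star_eq_conjTranspose, mul_assoc]
  rwa [mul_assoc, hy.mul_right_eq_zero, ← star_eq_conjTranspose, hy.star.mul_left_eq_zero]
    at hconj

end PositiveDefinite

theorem add_conjTranspose_eq_neg_sum_conjTranspose_mul_self {n ι : Type*} [Fintype n]
    [Fintype ι] {H G : Matrix n n ℂ} {L : ι → Matrix n n ℂ} (hH : H.IsHermitian)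
    (hG : G = (-(1/2 : ℂ)) • ∑ ℓ, (L ℓ)ᴴ * L ℓ - Complex.I • H) :
    G + Gᴴ = -∑ ℓ, (L ℓ)ᴴ * L ℓ := by
  subst hG
  simp only [conjTranspose_sub, conjTranspose_smul, conjTranspose_sum, conjTranspose_mul,
    conjTranspose_conjTranspose, hH.eq, star_neg, star_div₀, star_one, star_ofNat,
    Complex.star_def, Complex.conj_I]
  module

section GKSL

variable {d m : ℕ} (G : Matrix (Fin d) (Fin d) ℂ) (L : Fin m → Matrix (Fin d) (Fin d) ℂ)

theorem gkslGen_apply (y : Matrix (Fin d) (Fin d) ℂ) :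
    gkslGen G L y = Gᴴ * y + ∑ ℓ, (L ℓ)ᴴ * y * L ℓ + y * G := by
  simp [gkslGen, mul_assoc]

theorem gkslGen_conjTranspose (y : Matrix (Fin d) (Fin d) ℂ) :
    gkslGen G L yᴴ = (gkslGen G L y)ᴴ := by
  simp only [gkslGen_apply, conjTranspose_add, conjTranspose_mul, conjTranspose_sum,
    conjTranspose_conjTranspose, mul_assoc]
  abel

theorem trace_mul_gkslGen (ρ y : Matrix (Fin d) (Fin d) ℂ) :
    (ρ * gkslGen G L y).trace = ((G * ρ + ∑ ℓ, L ℓ * ρ * (L ℓ)ᴴ + ρ * Gᴴ) * y).trace := by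
  have hleft : (ρ * (Gᴴ * y)).trace = (ρ * Gᴴ * y).trace := by rw [mul_assoc]
  have hright : (ρ * (y * G)).trace = (G * ρ * y).trace := by rw [← mul_assoc, trace_mul_cycle]
  have hjump (ℓ : Fin m) : (ρ * ((L ℓ)ᴴ * y * L ℓ)).trace = (L ℓ * ρ * (L ℓ)ᴴ * y).trace := by
    simp only [← mul_assoc]
    rw [trace_mul_comm]
    simp only [← mul_assoc]
  simp only [gkslGen_apply, mul_add, add_mul, trace_add, Finset.mul_sum, Finset.sum_mul,
    trace_sum, hleft, hright, hjump]
  ring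

noncomputable def gkslDissipation (x y : Matrix (Fin d) (Fin d) ℂ) : Matrix (Fin d) (Fin d) ℂ :=
  gkslGen G L (x * y) - x * gkslGen G L y - gkslGen G L x * y

variable {G L}

theorem gkslDissipation_eq_sum (hG : G + Gᴴ = -∑ ℓ, (L ℓ)ᴴ * L ℓ)
    (x y : Matrix (Fin d) (Fin d) ℂ) :
    gkslDissipation G L x y = ∑ ℓ, ((L ℓ)ᴴ * x - x * (L ℓ)ᴴ) * (y * L ℓ - L ℓ * y) := by
  have hsum : ∑ ℓ, (L ℓ)ᴴ * L ℓ = -(G + Gᴴ) := by rw [hG, neg_neg]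
  have hterm (ℓ : Fin m) : ((L ℓ)ᴴ * x - x * (L ℓ)ᴴ) * (y * L ℓ - L ℓ * y) =
      (L ℓ)ᴴ * (x * y) * L ℓ - x * ((L ℓ)ᴴ * y * L ℓ) - (L ℓ)ᴴ * x * L ℓ * y +
        x * ((L ℓ)ᴴ * L ℓ) * y := by
    noncomm_ring
  simp only [gkslDissipation, gkslGen_apply, hterm, Finset.sum_add_distrib,
    Finset.sum_sub_distrib, ← Finset.mul_sum, ← Finset.sum_mul, hsum]
  noncomm_ring

theorem posSemidef_gkslDissipation_conjTranspose_self (hG : G + Gᴴ = -∑ ℓ, (L ℓ)ᴴ * L ℓ)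
    (x : Matrix (Fin d) (Fin d) ℂ) : (gkslDissipation G L xᴴ x).PosSemidef := by
  rw [gkslDissipation_eq_sum hG]
  refine Matrix.posSemidef_sum _ fun ℓ _ => ?_
  have hcomm : (L ℓ)ᴴ * xᴴ - xᴴ * (L ℓ)ᴴ = (x * L ℓ - L ℓ * x)ᴴ := by
    simp only [conjTranspose_sub, conjTranspose_mul]
  rw [hcomm]
  exact posSemidef_conjTranspose_mul_self _

end GKSL

theorem fixed_point_mem_decoherence_free_general {d m : ℕ}
    (H : Matrix (Fin d) (Fin d) ℂ) (hH : H.IsHermitian)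
    (L : Fin m → Matrix (Fin d) (Fin d) ℂ) (G : Matrix (Fin d) (Fin d) ℂ)
    (hG : G = (-(1/2 : ℂ)) • ∑ ℓ, (L ℓ)ᴴ * L ℓ - Complex.I • H)
    (ρ : Matrix (Fin d) (Fin d) ℂ) (hρpos : ρ.PosDef)
    (hρinv : G * ρ + ∑ ℓ, L ℓ * ρ * (L ℓ)ᴴ + ρ * Gᴴ = 0)
    (x : Matrix (Fin d) (Fin d) ℂ)
    (hx : ∀ t : ℝ, 0 ≤ t → (NormedSpace.exp ((t : ℂ) • gkslGen G L)) x = x) :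
    ∀ t : ℝ, 0 ≤ t →
      (NormedSpace.exp ((t : ℂ) • gkslGen G L)) (xᴴ * x) = xᴴ * x := by
  have hGL : G + Gᴴ = -∑ ℓ, (L ℓ)ᴴ * L ℓ :=
    add_conjTranspose_eq_neg_sum_conjTranspose_mul_self hH hG
  have hLx : gkslGen G L x = 0 := apply_eq_zero_of_forall_exp_smul_apply_eq_self hx
  have hLxH : gkslGen G L xᴴ = 0 := by rw [gkslGen_conjTranspose, hLx, conjTranspose_zero]
  have hLxx : gkslGen G L (xᴴ * x) = gkslDissipation G L xᴴ x := by
    simp [gkslDissipation, hLx, hLxH]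
  have htrace : (ρ * gkslGen G L (xᴴ * x)).trace = 0 := by
    rw [trace_mul_gkslGen, hρinv, zero_mul, trace_zero]
  have hzero : gkslGen G L (xᴴ * x) = 0 := by
    rw [hLxx] at htrace ⊢
    exact hρpos.eq_zero_of_trace_mul_eq_zero (posSemidef_gkslDissipation_conjTranspose_self hGL x)
      htrace
  intro t _
  exact NormedSpace.exp_smul_apply_eq_self_of_apply_eq_zero _ hzero

/-- if the QMS admits a faithful invariant state (a positive definite `ρ`
of trace `1` with `𝓛_*(ρ) = 0`), then every fixed point of the semigroup `T_t = exp(t 𝓛)`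
belongs to the decoherence free algebra: `T_t(x) = x` for all `t ≥ 0` implies
`T_t(x*x) = x*x` for all `t ≥ 0`. -/
theorem fixed_point_mem_decoherence_free {d m : ℕ} (hd : 1 ≤ d) (hm : 1 ≤ m)
    (H : Matrix (Fin d) (Fin d) ℂ) (hH : H.IsHermitian)
    (L : Fin m → Matrix (Fin d) (Fin d) ℂ) (G : Matrix (Fin d) (Fin d) ℂ)
    (hG : G = (-(1/2 : ℂ)) • ∑ ℓ, (L ℓ)ᴴ * L ℓ - Complex.I • H)
    (ρ : Matrix (Fin d) (Fin d) ℂ) (hρpos : ρ.PosDef) (hρtr : ρ.trace = 1)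
    (hρinv : G * ρ + ∑ ℓ, L ℓ * ρ * (L ℓ)ᴴ + ρ * Gᴴ = 0)
    (x : Matrix (Fin d) (Fin d) ℂ)
    (hx : ∀ t : ℝ, 0 ≤ t → (NormedSpace.exp ((t : ℂ) • gkslGen G L)) x = x) :
    ∀ t : ℝ, 0 ≤ t →
      (NormedSpace.exp ((t : ℂ) • gkslGen G L)) (xᴴ * x) = xᴴ * x :=
  fixed_point_mem_decoherence_free_general H hH L G hG ρ hρpos hρinv x hx
end

section
/- If the Lie algebra rank condition holds (i.e., for every nonzero ξ ∈ ℂ^d the set {A ξ : A in the Lie subalgebra of M_d(ℂ) generated by G̃, L_1, …, L_m} spans ℂ^d, where G̃ = G − (1/2)∑_{ℓ=1}^m L_ℓ²), then the QMS is irreducible. -/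
open Matrix

attribute [local instance 100] LieRing.ofAssociativeRing

/-!
An invariant subspace `V` of `G` and the `L ℓ` is invariant under the whole associative algebra
they generate, which contains `G̃`; being closed under commutators, that algebra contains the Lie
algebra generated by `G̃` and the `L ℓ`. So if `V` contains some `ξ ≠ 0`, it contains every `A ξ`
with `A` in that Lie algebra, and under the LARC these span `ℂ^d`.
-/

namespace Matrix

variable {n R : Type*} [Fintype n] [DecidableEq n] [CommRing R]

def invariantSubalgebra (V : Submodule R (n → R)) : Subalgebra R (Matrix n n R) where
  carrier := {A | ∀ v ∈ V, A *ᵥ v ∈ V}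
  mul_mem' {A B} hA hB v hv := by
    rw [← mulVec_mulVec]
    exact hA _ (hB v hv)
  add_mem' {A B} hA hB v hv := by
    rw [add_mulVec]
    exact V.add_mem (hA v hv) (hB v hv)
  algebraMap_mem' c v hv := by
    rw [algebraMap_eq_diagonal, Pi.algebraMap_def, Algebra.algebraMap_self, RingHom.id_apply,
      ← smul_one_eq_diagonal, smul_mulVec, one_mulVec]
    exact V.smul_mem c hv

end Matrix

theorem Submodule.eq_bot_or_eq_top_of_span_mulVec_eq_top {n R : Type*} [Fintype n] [CommRing R]
    {S : Set (Matrix n n R)}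
    (hS : ∀ ξ : n → R, ξ ≠ 0 → Submodule.span R {v | ∃ A ∈ S, v = A *ᵥ ξ} = ⊤)
    {V : Submodule R (n → R)} (hV : ∀ A ∈ S, ∀ v ∈ V, A *ᵥ v ∈ V) : V = ⊥ ∨ V = ⊤ := by
  refine or_iff_not_imp_left.mpr fun hV_ne => ?_
  obtain ⟨ξ, hξV, hξ⟩ := (Submodule.ne_bot_iff V).mp hV_ne
  rw [eq_top_iff, ← hS ξ hξ, Submodule.span_le]
  rintro _ ⟨A, hA, rfl⟩
  exact hV A hA ξ hξV

theorem larc_implies_irreducible_general {d m : ℕ}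
    (L : Fin m → Matrix (Fin d) (Fin d) ℂ) (G : Matrix (Fin d) (Fin d) ℂ)
    (Gt : Matrix (Fin d) (Fin d) ℂ)
    (hGt : Gt = G - (1/2 : ℂ) • ∑ ℓ, L ℓ ^ 2)
    (hlarc : ∀ ξ : Fin d → ℂ, ξ ≠ 0 →
      Submodule.span ℂ
        {v | ∃ A ∈ LieSubalgebra.lieSpan ℂ (Matrix (Fin d) (Fin d) ℂ)
          ({Gt} ∪ Set.range L), v = A *ᵥ ξ} = ⊤) :
    ∀ V : Submodule ℂ (Fin d → ℂ),
      (∀ v ∈ V, G *ᵥ v ∈ V) → (∀ ℓ, ∀ v ∈ V, L ℓ *ᵥ v ∈ V) → V = ⊥ ∨ V = ⊤ := by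
  intro V hGV hLV
  let K := lieSubalgebraOfSubalgebra ℂ _ (invariantSubalgebra V)
  have hL : ∀ ℓ, L ℓ ∈ invariantSubalgebra V := hLV
  have hgen : {Gt} ∪ Set.range L ⊆ (K : Set (Matrix (Fin d) (Fin d) ℂ)) := by
    rintro A (rfl | ⟨ℓ, rfl⟩)
    · rw [hGt]
      exact Subalgebra.sub_mem _ hGV <| Subalgebra.smul_mem _
        (Subalgebra.sum_mem _ fun ℓ _ => Subalgebra.pow_mem _ (hL ℓ) 2) _
    · exact hL ℓ
  have hle : LieSubalgebra.lieSpan ℂ _ ({Gt} ∪ Set.range L) ≤ K := LieSubalgebra.lieSpan_le.mpr hgen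
  exact Submodule.eq_bot_or_eq_top_of_span_mulVec_eq_top hlarc fun A hA => hle hA

/-- the Lie algebra rank condition implies irreducibility of the QMS:
if for every nonzero `ξ` the vectors `A ξ`, with `A` ranging over the Lie subalgebra
of `M_d(ℂ)` generated by `G̃ = G - (1/2)∑ ℓ, (L ℓ)²` and `L 1, …, L m`, span `ℂ^d`,
then the only subspaces of `ℂ^d` invariant under `G` and every `L ℓ` are `{0}`
and `ℂ^d`. -/
theorem larc_implies_irreducible {d m : ℕ} (hd : 1 ≤ d) (hm : 1 ≤ m)
    (H : Matrix (Fin d) (Fin d) ℂ) (hH : H.IsHermitian)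
    (L : Fin m → Matrix (Fin d) (Fin d) ℂ) (G : Matrix (Fin d) (Fin d) ℂ)
    (hG : G = (-(1/2 : ℂ)) • ∑ ℓ, (L ℓ)ᴴ * L ℓ - Complex.I • H)
    (Gt : Matrix (Fin d) (Fin d) ℂ)
    (hGt : Gt = G - (1/2 : ℂ) • ∑ ℓ, L ℓ ^ 2)
    (hlarc : ∀ ξ : Fin d → ℂ, ξ ≠ 0 →
      Submodule.span ℂ
        {v | ∃ A ∈ LieSubalgebra.lieSpan ℂ (Matrix (Fin d) (Fin d) ℂ)
          ({Gt} ∪ Set.range L), v = A *ᵥ ξ} = ⊤) :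
    ∀ V : Submodule ℂ (Fin d → ℂ),
      (∀ v ∈ V, G *ᵥ v ∈ V) → (∀ ℓ, ∀ v ∈ V, L ℓ *ᵥ v ∈ V) → V = ⊥ ∨ V = ⊤ :=
  larc_implies_irreducible_general L G Gt hGt hlarc
end

section
/- A generic QMS is irreducible if and only if the Lie algebra rank condition holds, i.e., the only subspaces of ℂ^d invariant under G and under every L_{ℓk} are {0} and ℂ^d if and only if for every nonzero ξ ∈ ℂ^d the set {A ξ : A in the Lie subalgebra of M_d(ℂ) generated by G̃ and the matrices L_{ℓk}, ℓ ≠ k} spans ℂ^d, where G̃ = G − (1/2)∑_{ℓ≠k} L_{ℓk}². -/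
/-! Since `L_{ℓk}² = 0`, `G̃ = G`. A subspace invariant under the generators is invariant under
the Lie algebra they generate, so the rank condition leaves no proper nonzero invariant subspace.
Conversely, `G` is diagonal, so irreducibility forces the graph of positive rates to be strongly
connected; along its paths the commutators of matrix units `⁅E_{qp}, E_{px}⁆ = E_{qx}` put every
off-diagonal matrix unit in the Lie algebra, and these together with
`⁅E_{am}, E_{ma}⁆ = E_{aa} - E_{mm}` (here `d ≥ 2` is needed) send any nonzero `ξ` onto every
basis vector. -/

open Matrix

attribute [local instance 100] LieRing.ofAssociativeRing

/-- Jump operators of a generic QMS: `L_{ℓk} = γ_{ℓk}^{1/2} |e_k⟩⟨e_ℓ|`. -/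
noncomputable def genL {d : ℕ} (γ : Fin d → Fin d → ℝ) (ℓ k : Fin d) :
    Matrix (Fin d) (Fin d) ℂ :=
  (Real.sqrt (γ ℓ k) : ℂ) • Matrix.single k ℓ 1

/-- `G = -(1/2)∑_{ℓ≠k} γ_{ℓk} |e_ℓ⟩⟨e_ℓ| - iH` for a generic QMS with real diagonal
Hamiltonian `H = diag(h)`. -/
noncomputable def genG {d : ℕ} (γ : Fin d → Fin d → ℝ) (h : Fin d → ℝ) :
    Matrix (Fin d) (Fin d) ℂ :=
  (-(1/2 : ℂ)) • (∑ ℓ, ∑ k, if ℓ ≠ k then (γ ℓ k : ℂ) • Matrix.single ℓ ℓ 1 else 0)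
    - Complex.I • Matrix.diagonal (fun j => (h j : ℂ))

open Relation

namespace Matrix

variable {n R : Type*} [Fintype n] [DecidableEq n]

section CommRing

variable [CommRing R]

theorem single_one_lie_single_one_of_ne {i k : n} (j : n) (hik : i ≠ k) :
    ⁅single i j (1 : R), single j k (1 : R)⁆ = single i k 1 := by
  rw [Ring.lie_def, single_mul_single_same, single_mul_single_of_ne (h := hik.symm), mul_one,
    sub_zero]

theorem single_one_lie_single_one_swap (i j : n) :
    ⁅single i j (1 : R), single j i (1 : R)⁆ = single i i 1 - single j j 1 := by
  rw [Ring.lie_def, single_mul_single_same, single_mul_single_same, one_mul]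

theorem IsDiag.mulVec_mem_pi_bot {A : Matrix n n R} (hA : A.IsDiag) {s : Set n} {v : n → R}
    (hv : v ∈ Submodule.pi s fun _ => (⊥ : Submodule R R)) :
    A *ᵥ v ∈ Submodule.pi s fun _ => (⊥ : Submodule R R) := by
  simp only [Submodule.mem_pi, Submodule.mem_bot] at hv ⊢
  intro i hi
  rw [← hA.diagonal_diag, mulVec_diagonal, hv i hi, mul_zero]

theorem single_mulVec_mem_pi_bot {s : Set n} {i j : n} (hij : i ∈ s → j ∈ s) (c : R)
    {v : n → R} (hv : v ∈ Submodule.pi s fun _ => (⊥ : Submodule R R)) :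
    single i j c *ᵥ v ∈ Submodule.pi s fun _ => (⊥ : Submodule R R) := by
  simp only [Submodule.mem_pi, Submodule.mem_bot] at hv ⊢
  intro k hk
  rw [single_mulVec_eq, Pi.smul_apply, Pi.single_apply, smul_eq_mul]
  split_ifs with hki
  · rw [hv j (hij (hki ▸ hk)), mul_zero, zero_mul]
  · rw [mul_zero]

def mulVecStabilizer (V : Submodule R (n → R)) : LieSubalgebra R (Matrix n n R) where
  carrier := {A | ∀ v ∈ V, A *ᵥ v ∈ V}
  zero_mem' v _ := by simp
  add_mem' hA hB v hv := by rw [add_mulVec]; exact V.add_mem (hA v hv) (hB v hv)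
  smul_mem' c A hA v hv := by rw [smul_mulVec]; exact V.smul_mem c (hA v hv)
  lie_mem' {A B} hA hB v hv := by
    rw [Ring.lie_def, sub_mulVec, ← mulVec_mulVec, ← mulVec_mulVec]
    exact V.sub_mem (hA _ (hB v hv)) (hB _ (hA v hv))

theorem span_mulVec_lieSpan_le {S : Set (Matrix n n R)} {V : Submodule R (n → R)}
    (hS : ∀ A ∈ S, ∀ v ∈ V, A *ᵥ v ∈ V) {ξ : n → R} (hξ : ξ ∈ V) :
    Submodule.span R {v | ∃ A ∈ LieSubalgebra.lieSpan R (Matrix n n R) S, v = A *ᵥ ξ} ≤ V := by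
  have hle : LieSubalgebra.lieSpan R (Matrix n n R) S ≤ mulVecStabilizer V :=
    (LieSubalgebra.lieSpan_le).2 hS
  rw [Submodule.span_le]
  rintro _ ⟨A, hA, rfl⟩
  exact hle hA ξ hξ

theorem single_one_mem_of_reflTransGen {L : LieSubalgebra R (Matrix n n R)} {r : n → n → Prop}
    (hr : ∀ x y, r x y → single y x (1 : R) ∈ L) {x y : n} (hxy : ReflTransGen r x y)
    (hne : x ≠ y) : single y x (1 : R) ∈ L := by
  induction hxy with
  | refl => exact absurd rfl hne
  | @tail p q _ hpq ih =>
    rcases eq_or_ne x p with rfl | hxp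
    · exact hr _ _ hpq
    · rw [← single_one_lie_single_one_of_ne p hne.symm]
      exact L.lie_mem (hr _ _ hpq) (ih hxp)

end CommRing

theorem span_mulVec_eq_top {K : Type*} [Field K] [Nontrivial n]
    {L : LieSubalgebra K (Matrix n n K)}
    (hL : ∀ x y, x ≠ y → single y x (1 : K) ∈ L) {ξ : n → K} (hξ : ξ ≠ 0) :
    Submodule.span K {v | ∃ A ∈ L, v = A *ᵥ ξ} = ⊤ := by
  set W := Submodule.span K {v | ∃ A ∈ L, v = A *ᵥ ξ}
  have hW : ∀ A ∈ L, A *ᵥ ξ ∈ W := fun A hA => Submodule.subset_span ⟨A, hA, rfl⟩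
  obtain ⟨a, ha⟩ : ∃ a, ξ a ≠ 0 := Function.ne_iff.1 hξ
  have hoff : ∀ j ≠ a, Pi.single j 1 ∈ W := by
    intro j hj
    have h := hW _ (hL a j hj.symm)
    rw [single_mulVec_eq, one_mul] at h
    exact (W.smul_mem_iff ha).1 h
  have hdiag : Pi.single a 1 ∈ W := by
    obtain ⟨m, hm⟩ := exists_ne a
    have h := W.add_mem (hW _ (L.lie_mem (hL m a hm) (hL a m hm.symm)))
      (W.smul_mem (ξ m) (hoff m hm))
    rw [single_one_lie_single_one_swap, sub_mulVec, single_mulVec_eq, single_mulVec_eq,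
      one_mul, one_mul, sub_add_cancel] at h
    exact (W.smul_mem_iff ha).1 h
  refine eq_top_iff.2 ((Pi.basisFun K n).span_eq ▸ Submodule.span_le.2 ?_)
  rintro _ ⟨j, rfl⟩
  rw [Pi.basisFun_apply]
  rcases eq_or_ne j a with rfl | hj
  exacts [hdiag, hoff j hj]

end Matrix

section GenericQMS

variable {d : ℕ} {γ : Fin d → Fin d → ℝ}

theorem genL_sq_eq_zero {ℓ k : Fin d} (hℓk : ℓ ≠ k) : genL γ ℓ k ^ 2 = 0 := by
  rw [genL, sq, smul_mul_smul_comm, single_mul_single_of_ne (h := hℓk), smul_zero]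

theorem isDiag_genG (h : Fin d → ℝ) : (genG γ h).IsDiag := by
  intro i j hij
  have hsingle (x : Fin d) (c : ℂ) : single x x c i j = 0 :=
    single_apply_of_ne _ _ _ _ _ fun hx => hij (hx.1.symm.trans hx.2)
  simp [genG, Matrix.sum_apply, apply_ite (fun M : Matrix (Fin d) (Fin d) ℂ => M i j), hij,
    hsingle]

theorem single_one_mem_of_genL_mem {L : LieSubalgebra ℂ (Matrix (Fin d) (Fin d) ℂ)} {x y : Fin d}
    (hmem : genL γ x y ∈ L) (hpos : 0 < γ x y) : single y x (1 : ℂ) ∈ L := by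
  have hne : ((√(γ x y) : ℝ) : ℂ) ≠ 0 := by exact_mod_cast (Real.sqrt_pos.2 hpos).ne'
  have h := L.smul_mem ((√(γ x y) : ℂ))⁻¹ hmem
  rwa [genL, inv_smul_smul₀ hne] at h

/-- The vectors supported on the vertices reachable from `a` form an invariant subspace. -/
theorem reflTransGen_of_irreducible {h : Fin d → ℝ}
    (hirr : ∀ V : Submodule ℂ (Fin d → ℂ), (∀ v ∈ V, genG γ h *ᵥ v ∈ V) →
      (∀ ℓ k : Fin d, ℓ ≠ k → ∀ v ∈ V, genL γ ℓ k *ᵥ v ∈ V) → V = ⊥ ∨ V = ⊤)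
    (a b : Fin d) : ReflTransGen (fun x y => x ≠ y ∧ 0 < γ x y) a b := by
  set C := {j | ReflTransGen (fun x y => x ≠ y ∧ 0 < γ x y) a j}
  set V := Submodule.pi Cᶜ fun _ : Fin d => (⊥ : Submodule ℂ ℂ)
  have hG : ∀ v ∈ V, genG γ h *ᵥ v ∈ V := fun v => (isDiag_genG h).mulVec_mem_pi_bot
  have hL : ∀ x y : Fin d, x ≠ y → ∀ v ∈ V, genL γ x y *ᵥ v ∈ V := by
    intro x y hxy v hv
    by_cases hpos : 0 < γ x y
    · rw [genL, smul_mulVec]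
      exact V.smul_mem _ (single_mulVec_mem_pi_bot (s := Cᶜ)
        (fun (hy : y ∉ C) (hx : x ∈ C) => hy (hx.tail ⟨hxy, hpos⟩)) _ hv)
    · simp [genL, Real.sqrt_eq_zero'.2 (not_lt.1 hpos)]
  rcases hirr V hG hL with hV | hV
  · have ha : Pi.single a (1 : ℂ) ∈ V := by
      simp only [V, Submodule.mem_pi, Submodule.mem_bot]
      rintro j (hj : j ∉ C)
      rw [Pi.single_apply, if_neg]
      rintro rfl
      exact hj ReflTransGen.refl
    simp [hV] at ha
  · by_contra hb
    have hb' : Pi.single b (1 : ℂ) ∈ V := hV ▸ Submodule.mem_top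
    simp only [V, Submodule.mem_pi, Submodule.mem_bot] at hb'
    simpa using hb' b hb

end GenericQMS

theorem generic_irreducible_iff_larc_general {d : ℕ} (hd : 2 ≤ d)
    (γ : Fin d → Fin d → ℝ)
    (h : Fin d → ℝ)
    (Gt : Matrix (Fin d) (Fin d) ℂ)
    (hGt : Gt = genG γ h
      - (1/2 : ℂ) • ∑ ℓ, ∑ k, if ℓ ≠ k then (genL γ ℓ k) ^ 2 else 0) :
    (∀ V : Submodule ℂ (Fin d → ℂ),
        (∀ v ∈ V, genG γ h *ᵥ v ∈ V) →
        (∀ ℓ k : Fin d, ℓ ≠ k → ∀ v ∈ V, genL γ ℓ k *ᵥ v ∈ V) → V = ⊥ ∨ V = ⊤)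
      ↔ (∀ ξ : Fin d → ℂ, ξ ≠ 0 →
          Submodule.span ℂ
            {v | ∃ A ∈ LieSubalgebra.lieSpan ℂ (Matrix (Fin d) (Fin d) ℂ)
              {A | A = Gt ∨ ∃ ℓ k : Fin d, ℓ ≠ k ∧ A = genL γ ℓ k},
              v = A *ᵥ ξ} = ⊤) := by
  have hGt_eq : Gt = genG γ h := by
    simp +contextual [hGt, genL_sq_eq_zero]
  subst hGt_eq
  constructor
  · intro hirr ξ hξ
    have : Nontrivial (Fin d) := Fin.nontrivial_iff_two_le.2 hd
    refine span_mulVec_eq_top (fun x y hxy => ?_) hξ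
    refine single_one_mem_of_reflTransGen (fun p q hpq => ?_)
      (reflTransGen_of_irreducible hirr x y) hxy
    exact single_one_mem_of_genL_mem
      (LieSubalgebra.subset_lieSpan (Or.inr ⟨p, q, hpq.1, rfl⟩)) hpq.2
  · intro hlarc V hG hL
    refine or_iff_not_imp_left.2 fun hV => ?_
    obtain ⟨ξ, hξV, hξ⟩ := V.exists_mem_ne_zero_of_ne_bot hV
    refine eq_top_iff.2 (hlarc ξ hξ ▸ span_mulVec_lieSpan_le ?_ hξV)
    rintro A (rfl | ⟨ℓ, k, hℓk, rfl⟩)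
    exacts [hG, hL ℓ k hℓk]

/-- a generic QMS is irreducible if and only if the Lie algebra rank
condition holds: the only subspaces of `ℂ^d` invariant under `G` and every `L_{ℓk}`
are `{0}` and `ℂ^d` iff for every nonzero `ξ` the set `{A ξ}` with `A` in the Lie
subalgebra generated by `G̃ = G - (1/2)∑_{ℓ≠k} L_{ℓk}²` and the `L_{ℓk}` spans `ℂ^d`. -/
theorem generic_irreducible_iff_larc {d : ℕ} (hd : 2 ≤ d)
    (γ : Fin d → Fin d → ℝ) (hγ : ∀ ℓ k : Fin d, ℓ ≠ k → 0 ≤ γ ℓ k)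
    (h : Fin d → ℝ)
    (Gt : Matrix (Fin d) (Fin d) ℂ)
    (hGt : Gt = genG γ h
      - (1/2 : ℂ) • ∑ ℓ, ∑ k, if ℓ ≠ k then (genL γ ℓ k) ^ 2 else 0) :
    (∀ V : Submodule ℂ (Fin d → ℂ),
        (∀ v ∈ V, genG γ h *ᵥ v ∈ V) →
        (∀ ℓ k : Fin d, ℓ ≠ k → ∀ v ∈ V, genL γ ℓ k *ᵥ v ∈ V) → V = ⊥ ∨ V = ⊤)
      ↔ (∀ ξ : Fin d → ℂ, ξ ≠ 0 →
          Submodule.span ℂ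
            {v | ∃ A ∈ LieSubalgebra.lieSpan ℂ (Matrix (Fin d) (Fin d) ℂ)
              {A | A = Gt ∨ ∃ ℓ k : Fin d, ℓ ≠ k ∧ A = genL γ ℓ k},
              v = A *ᵥ ξ} = ⊤) :=
  generic_irreducible_iff_larc_general hd γ h Gt hGt
end

section
/- If the classical Markov chain associated with a generic QMS is irreducible (for every ℓ ≠ k there exist n ≥ 0 and states j₁,…,j_n with γ_{ℓ j₁} γ_{j₁ j₂} ··· γ_{j_n k} > 0), then the Lie algebra rank condition holds: for every nonzero ξ ∈ ℂ^d the set {A ξ : A in the Lie subalgebra of M_d(ℂ) generated by G̃ and the matrices L_{ℓk}, ℓ ≠ k} spans ℂ^d, where G̃ = G − (1/2)∑_{ℓ≠k} L_{ℓk}². -/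
open Matrix

attribute [local instance 100] LieRing.ofAssociativeRing

/-- The product `γ_{ℓ j₁} γ_{j₁ j₂} ⋯ γ_{jₙ k}` of rates along the path
`ℓ → j₁ → ⋯ → jₙ → k`; for the empty path it is `γ_{ℓk}`. -/
noncomputable def pathProd {d : ℕ} (γ : Fin d → Fin d → ℝ) :
    Fin d → List (Fin d) → Fin d → ℝ
  | a, [], b => γ a b
  | a, j :: rest, b => γ a j * pathProd γ j rest b

/-!
A positive rate `γ_{ℓk}` puts the matrix unit `E_{kℓ} = |e_k⟩⟨e_ℓ|` into the Lie algebra, and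
`⁅E_{kc}, E_{cℓ}⁆ = E_{kℓ}` for `k ≠ ℓ`, so following paths of the irreducible chain yields every
off-diagonal matrix unit; the brackets `⁅E_{jm}, E_{mj}⁆ = E_{jj} - E_{mm}` follow. If `ξ_j ≠ 0`,
then `E_{ij} ξ = ξ_j e_i` gives `e_i` for `i ≠ j`, and `(E_{jj} - E_{mm}) ξ` gives `e_j`.
-/

section MatrixUnits

variable {R n : Type*} [CommRing R] [Fintype n] [DecidableEq n]

lemma lie_single_single_of_ne (i j k : n) (hik : i ≠ k) :
    ⁅(single i j 1 : Matrix n n R), (single j k 1 : Matrix n n R)⁆ = single i k 1 := by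
  rw [Ring.lie_def, single_mul_single_same, single_mul_single_of_ne (h := hik.symm)]
  simp

lemma lie_single_single_swap (i j : n) :
    ⁅(single i j 1 : Matrix n n R), (single j i 1 : Matrix n n R)⁆ =
      single i i 1 - single j j 1 := by
  rw [Ring.lie_def, single_mul_single_same, single_mul_single_same]
  simp

lemma single_mem_of_reflTransGen (S : LieSubalgebra R (Matrix n n R)) {r : n → n → Prop}
    (hedge : ∀ a b, a ≠ b → r a b → single b a (1 : R) ∈ S) {a b : n}
    (hab : Relation.ReflTransGen r a b) (hne : a ≠ b) : single b a (1 : R) ∈ S := by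
  induction hab using Relation.ReflTransGen.head_induction_on with
  | refl => exact absurd rfl hne
  | @head x c hxc _ ih =>
    by_cases hxc' : x = c
    · subst hxc'
      exact ih hne
    by_cases hcb : c = b
    · subst hcb
      exact hedge _ _ hxc' hxc
    rw [← lie_single_single_of_ne b c x hne.symm]
    exact S.lie_mem (ih hcb) (hedge _ _ hxc' hxc)

end MatrixUnits

lemma span_mulVec_eq_top_of_single_mem {K n : Type*} [Field K] [Fintype n] [DecidableEq n]
    [Nontrivial n] (S : LieSubalgebra K (Matrix n n K))
    (hS : ∀ i j, i ≠ j → single i j (1 : K) ∈ S) {ξ : n → K} (hξ : ξ ≠ 0) :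
    Submodule.span K {v | ∃ A ∈ S, v = A *ᵥ ξ} = ⊤ := by
  obtain ⟨j, hj⟩ : ∃ j, ξ j ≠ 0 := Function.ne_iff.mp hξ
  set T := Submodule.span K {v | ∃ A ∈ S, v = A *ᵥ ξ}
  have mem : ∀ A ∈ S, A *ᵥ ξ ∈ T := fun A hA => Submodule.subset_span ⟨A, hA, rfl⟩
  have off_diag : ∀ i, i ≠ j → Pi.single i 1 ∈ T := by
    intro i hij
    have hv := mem _ (hS i j hij)
    rw [single_mulVec_eq, one_mul] at hv
    exact (T.smul_mem_iff hj).mp hv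
  have diag : Pi.single j 1 ∈ T := by
    obtain ⟨m, hm⟩ := exists_ne j
    have hv := mem _ (S.lie_mem (hS j m hm.symm) (hS m j hm))
    rw [lie_single_single_swap, sub_mulVec, single_mulVec_eq, single_mulVec_eq, one_mul,
      one_mul] at hv
    have hv' := T.add_mem hv (T.smul_mem (ξ m) (off_diag m hm))
    rw [sub_add_cancel] at hv'
    exact (T.smul_mem_iff hj).mp hv'
  rw [eq_top_iff, ← (Pi.basisFun K n).span_eq, Submodule.span_le]
  rintro _ ⟨i, rfl⟩
  rw [Pi.basisFun_apply]
  by_cases hij : i = j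
  · exact hij ▸ diag
  · exact off_diag i hij

lemma reflTransGen_of_pathProd_ne_zero {d : ℕ} {γ : Fin d → Fin d → ℝ}
    (hγ : ∀ ℓ k : Fin d, ℓ ≠ k → 0 ≤ γ ℓ k) {a b : Fin d} (l : List (Fin d))
    (hl : pathProd γ a l b ≠ 0) :
    Relation.ReflTransGen (fun x y => x ≠ y ∧ 0 < γ x y) a b := by
  have step : ∀ x y, γ x y ≠ 0 → Relation.ReflTransGen (fun x y => x ≠ y ∧ 0 < γ x y) x y := by
    intro x y hxy
    by_cases h : x = y
    · exact h ▸ Relation.ReflTransGen.refl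
    · exact Relation.ReflTransGen.single ⟨h, (hγ x y h).lt_of_ne' hxy⟩
  induction l generalizing a with
  | nil => exact step a b hl
  | cons j rest ih =>
    obtain ⟨haj, hjb⟩ := mul_ne_zero_iff.mp hl
    exact (step a j haj).trans (ih hjb)

lemma single_mem_of_genL_mem {d : ℕ} {γ : Fin d → Fin d → ℝ} {ℓ k : Fin d} (hpos : 0 < γ ℓ k)
    {S : LieSubalgebra ℂ (Matrix (Fin d) (Fin d) ℂ)} (hL : genL γ ℓ k ∈ S) :
    single k ℓ (1 : ℂ) ∈ S := by
  have hsqrt : (Real.sqrt (γ ℓ k) : ℂ) ≠ 0 := by exact_mod_cast (Real.sqrt_pos.mpr hpos).ne'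
  exact (Submodule.smul_mem_iff _ hsqrt).mp hL

theorem generic_chain_irreducible_implies_larc_general {d : ℕ} (hd : 2 ≤ d)
    (γ : Fin d → Fin d → ℝ) (hγ : ∀ ℓ k : Fin d, ℓ ≠ k → 0 ≤ γ ℓ k)
    (Gt : Matrix (Fin d) (Fin d) ℂ)
    (hchain : ∀ ℓ k : Fin d, ℓ ≠ k → ∃ l : List (Fin d), 0 < pathProd γ ℓ l k) :
    ∀ ξ : Fin d → ℂ, ξ ≠ 0 →
      Submodule.span ℂ
        {v | ∃ A ∈ LieSubalgebra.lieSpan ℂ (Matrix (Fin d) (Fin d) ℂ)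
          {A | A = Gt ∨ ∃ ℓ k : Fin d, ℓ ≠ k ∧ A = genL γ ℓ k},
          v = A *ᵥ ξ} = ⊤ := by
  intro ξ hξ
  have : Nontrivial (Fin d) := Fin.nontrivial_iff_two_le.mpr hd
  refine span_mulVec_eq_top_of_single_mem _ (fun k ℓ hkℓ => ?_) hξ
  obtain ⟨l, hl⟩ := hchain ℓ k hkℓ.symm
  refine single_mem_of_reflTransGen _ (fun a b hab ⟨_, hpos⟩ => ?_)
    (reflTransGen_of_pathProd_ne_zero hγ l hl.ne') hkℓ.symm
  exact single_mem_of_genL_mem hpos (LieSubalgebra.subset_lieSpan (Or.inr ⟨a, b, hab, rfl⟩))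

/-- if the classical Markov chain associated with a generic QMS is
irreducible, then the Lie algebra rank condition holds: for every nonzero `ξ` the
set `{A ξ}` with `A` in the Lie subalgebra of `M_d(ℂ)` generated by
`G̃ = G - (1/2)∑_{ℓ≠k} L_{ℓk}²` and the matrices `L_{ℓk}` spans `ℂ^d`. -/
theorem generic_chain_irreducible_implies_larc {d : ℕ} (hd : 2 ≤ d)
    (γ : Fin d → Fin d → ℝ) (hγ : ∀ ℓ k : Fin d, ℓ ≠ k → 0 ≤ γ ℓ k)
    (h : Fin d → ℝ)
    (Gt : Matrix (Fin d) (Fin d) ℂ)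
    (hGt : Gt = genG γ h
      - (1/2 : ℂ) • ∑ ℓ, ∑ k, if ℓ ≠ k then (genL γ ℓ k) ^ 2 else 0)
    (hchain : ∀ ℓ k : Fin d, ℓ ≠ k → ∃ l : List (Fin d), 0 < pathProd γ ℓ l k) :
    ∀ ξ : Fin d → ℂ, ξ ≠ 0 →
      Submodule.span ℂ
        {v | ∃ A ∈ LieSubalgebra.lieSpan ℂ (Matrix (Fin d) (Fin d) ℂ)
          {A | A = Gt ∨ ∃ ℓ k : Fin d, ℓ ≠ k ∧ A = genL γ ℓ k},
          v = A *ᵥ ξ} = ⊤ :=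
  generic_chain_irreducible_implies_larc_general hd γ hγ Gt hchain
end

section
/- Let ℓ = j₀, j₁, …, j_n, j_{n+1} = k be pairwise distinct states in {1,…,d} (n ≥ 1). Then the iterated commutator of the generic jump operators satisfies [L_{j_n k}, [L_{j_{n−1} j_n}, [ ··· , [L_{j₁ j₂}, L_{ℓ j₁}] ··· ]]] = (γ_{ℓ j₁} γ_{j₁ j₂} ··· γ_{j_n k})^{1/2} |e_k⟩⟨e_ℓ|. -/
open Matrix

/-!
Each jump operator is a scaled matrix unit, and `⁅E_{ki}, E_{iℓ}⁆ = E_{kℓ} - δ_{ℓk} E_{ii}`, so as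
long as the path never returns to its starting state the commutator with the next jump operator
just extends the path by one step and multiplies the coefficient by the next `√γ`.
-/

namespace Matrix

variable {ι α : Type*} [Fintype ι] [DecidableEq ι]

theorem lie_single_single_of_ne [Ring α] {i j k : ι} (a b : α) (hki : k ≠ i) :
    ⁅single i j a, single j k b⁆ = single i k (a * b) := by
  rw [Ring.lie_def, single_mul_single_same, single_mul_single_of_ne (h := hki), sub_zero]

theorem iterated_lie_single_chain [CommRing α] (c : ℕ → α) (j : ℕ → ι)
    (B : ℕ → Matrix ι ι α) (hB0 : B 0 = single (j 1) (j 0) (c 0))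
    (hBsucc : ∀ i, B (i + 1) = ⁅single (j (i + 2)) (j (i + 1)) (c (i + 1)), B i⁆) :
    ∀ m, (∀ i, 0 < i → i ≤ m + 1 → j i ≠ j 0) →
      B m = single (j (m + 1)) (j 0) (∏ i ∈ Finset.range (m + 1), c i)
  | 0, _ => by simp [hB0]
  | m + 1, hne => by
    rw [hBsucc, iterated_lie_single_chain c j B hB0 hBsucc m
        (fun i hi him => hne i hi (by omega)),
      lie_single_single_of_ne _ _ (hne (m + 2) (by omega) le_rfl).symm,
      Finset.prod_range_succ _ (m + 1), mul_comm]

end Matrix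

theorem genL_eq_single {d : ℕ} (γ : Fin d → Fin d → ℝ) (ℓ k : Fin d) :
    genL γ ℓ k = single k ℓ (Real.sqrt (γ ℓ k) : ℂ) := by
  rw [genL, smul_single, smul_eq_mul, mul_one]

theorem generic_iterated_commutator_general {d : ℕ}
    (γ : Fin d → Fin d → ℝ) (hγ : ∀ ℓ k : Fin d, ℓ ≠ k → 0 ≤ γ ℓ k)
    (n : ℕ) (j : ℕ → Fin d)
    (hinj : ∀ a b : ℕ, a ≤ n + 1 → b ≤ n + 1 → j a = j b → a = b)
    (B : ℕ → Matrix (Fin d) (Fin d) ℂ)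
    (hB0 : B 0 = genL γ (j 0) (j 1))
    (hBsucc : ∀ i : ℕ, B (i + 1) = ⁅genL γ (j (i + 1)) (j (i + 2)), B i⁆) :
    B n = ((Real.sqrt (∏ i ∈ Finset.range (n + 1), γ (j i) (j (i + 1))) : ℝ) : ℂ) •
      Matrix.single (j (n + 1)) (j 0) 1 := by
  have hchain := iterated_lie_single_chain (fun i => (Real.sqrt (γ (j i) (j (i + 1))) : ℂ)) j B
    (by rw [hB0, genL_eq_single]) (fun i => by rw [hBsucc, genL_eq_single]) n
    (fun i hi hin h => absurd (hinj i 0 hin (Nat.zero_le _) h) hi.ne')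
  have hγ_path : ∀ i ∈ Finset.range (n + 1), 0 ≤ γ (j i) (j (i + 1)) := fun i hi =>
    have hin := Finset.mem_range.mp hi
    hγ _ _ fun h => absurd (hinj i (i + 1) (by omega) (by omega) h) (by omega)
  rw [hchain, smul_single, smul_eq_mul, mul_one, Real.sqrt_prod _ hγ_path, Complex.ofReal_prod]

/-- for pairwise distinct states `ℓ = j₀, j₁, …, jₙ, jₙ₊₁ = k`
(`n ≥ 1`), the iterated commutator
`[L_{jₙ k}, [L_{jₙ₋₁ jₙ}, [⋯, [L_{j₁ j₂}, L_{ℓ j₁}]⋯]]]` equals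
`(γ_{ℓ j₁} γ_{j₁ j₂} ⋯ γ_{jₙ k})^{1/2} |e_k⟩⟨e_ℓ|`.
Here `B i` is the inner iterated commutator built from the first `i+1` jump
operators: `B 0 = L_{j₀ j₁}` and `B (i+1) = ⁅L_{jᵢ₊₁ jᵢ₊₂}, B i⁆`. -/
theorem generic_iterated_commutator {d : ℕ} (hd : 2 ≤ d)
    (γ : Fin d → Fin d → ℝ) (hγ : ∀ ℓ k : Fin d, ℓ ≠ k → 0 ≤ γ ℓ k)
    (n : ℕ) (hn : 1 ≤ n) (j : ℕ → Fin d)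
    (hinj : ∀ a b : ℕ, a ≤ n + 1 → b ≤ n + 1 → j a = j b → a = b)
    (B : ℕ → Matrix (Fin d) (Fin d) ℂ)
    (hB0 : B 0 = genL γ (j 0) (j 1))
    (hBsucc : ∀ i : ℕ, B (i + 1) = ⁅genL γ (j (i + 1)) (j (i + 2)), B i⁆) :
    B n = ((Real.sqrt (∏ i ∈ Finset.range (n + 1), γ (j i) (j (i + 1))) : ℝ) : ℂ) •
      Matrix.single (j (n + 1)) (j 0) 1 :=
  generic_iterated_commutator_general γ hγ n j hinj B hB0 hBsucc
end

section
/- Let d = 2, m = 1, L = iσ₂, H = σ₃ and G = −(1/2)L*L − iH = −(1/2)·𝟙 − iσ₃, where σ₂, σ₃ are the Pauli matrices. Then S(ξ) = ℂ² for every nonzero ξ ∈ ℂ²; in particular the associated QMS is irreducible even though L is anti-selfadjoint. -/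
/-! A subspace of `ℂ²` other than `0` and `ℂ²` is the line through any of its nonzero vectors
`ξ`; if it also contains `Aξ` and `Bξ`, then `ξ` is a common eigenvector of `A` and `B`, so
`[A, B] ξ = 0`. Both `S(ξ)` and a subspace invariant under `G` and `L` contain `ξ`, `Lξ` and
`[G, L] ξ`, and here `[G, L] = -2iσ₁` and `[L, [G, L]] = -4iσ₃` is invertible. -/

open Matrix

/-- Iterated commutator `δ_G^n(A)`: `δ_G^0(A) = A`, `δ_G^{n+1}(A) = [G, δ_G^n(A)]`. -/
noncomputable def deltaG {d : ℕ} (G : Matrix (Fin d) (Fin d) ℂ) :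
    ℕ → Matrix (Fin d) (Fin d) ℂ → Matrix (Fin d) (Fin d) ℂ
  | 0, A => A
  | n + 1, A => G * deltaG G n A - deltaG G n A * G

/-- `S(ξ)` for a single jump operator `L`: the linear span of `ξ` together with
all vectors `δ_G^{n₁}(L) δ_G^{n₂}(L) ⋯ δ_G^{n_k}(L) ξ`, `k ≥ 1`. -/
noncomputable def SxiOne {d : ℕ} (G L : Matrix (Fin d) (Fin d) ℂ) (ξ : Fin d → ℂ) :
    Submodule ℂ (Fin d → ℂ) :=
  Submodule.span ℂ
    ({ξ} ∪ {v | ∃ l : List ℕ, l ≠ [] ∧ v = (l.map fun n => deltaG G n L).prod *ᵥ ξ})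

theorem Submodule.eq_top_of_commutator_det_ne_zero {K : Type*} [Field K]
    {V : Submodule K (Fin 2 → K)} {A B : Matrix (Fin 2) (Fin 2) K}
    (hdet : (A * B - B * A).det ≠ 0) {ξ : Fin 2 → K} (hξ : ξ ≠ 0) (hξV : ξ ∈ V)
    (hA : A *ᵥ ξ ∈ V) (hB : B *ᵥ ξ ∈ V) : V = ⊤ := by
  by_contra hV
  have hV_eq : K ∙ ξ = V := by
    refine Submodule.eq_of_le_of_finrank_le (Submodule.span_singleton_le_iff_mem _ _ |>.2 hξV) ?_
    have := Submodule.finrank_lt hV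
    simp only [Module.finrank_fin_fun] at this
    rw [finrank_span_singleton hξ]
    omega
  obtain ⟨a, ha⟩ := Submodule.mem_span_singleton.1 (hV_eq ▸ hA)
  obtain ⟨b, hb⟩ := Submodule.mem_span_singleton.1 (hV_eq ▸ hB)
  have hker : (A * B - B * A) *ᵥ ξ = 0 := by
    rw [sub_mulVec, ← mulVec_mulVec, ← mulVec_mulVec, ← ha, ← hb, mulVec_smul, mulVec_smul,
      ← ha, ← hb, smul_smul, smul_smul, mul_comm, sub_self]
  exact hξ (eq_zero_of_mulVec_eq_zero hdet hker)

section SxiOne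

variable {d : ℕ} (G L : Matrix (Fin d) (Fin d) ℂ) (ξ : Fin d → ℂ)

theorem self_mem_SxiOne : ξ ∈ SxiOne G L ξ :=
  Submodule.subset_span (Or.inl rfl)

theorem deltaG_mulVec_mem_SxiOne (n : ℕ) : deltaG G n L *ᵥ ξ ∈ SxiOne G L ξ :=
  Submodule.subset_span (Or.inr ⟨[n], List.cons_ne_nil _ _, by simp⟩)

end SxiOne

theorem Submodule.commutator_mulVec_mem {d : ℕ} {V : Submodule ℂ (Fin d → ℂ)}
    {G L : Matrix (Fin d) (Fin d) ℂ} (hG : ∀ v ∈ V, G *ᵥ v ∈ V) (hL : ∀ v ∈ V, L *ᵥ v ∈ V)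
    {v : Fin d → ℂ} (hv : v ∈ V) : (G * L - L * G) *ᵥ v ∈ V := by
  rw [sub_mulVec, ← mulVec_mulVec, ← mulVec_mulVec]
  exact V.sub_mem (hG _ (hL _ hv)) (hL _ (hG _ hv))

/-- for `d = 2`, `m = 1`, `L = iσ₂`, `H = σ₃` and
`G = -(1/2)L*L - iH = -(1/2)𝟙 - iσ₃`, one has `S(ξ) = ℂ²` for every nonzero `ξ`;
in particular the associated QMS is irreducible even though `L` is anti-selfadjoint. -/
theorem pauli_example_Sxi_eq_top
    (σ₂ σ₃ L H G : Matrix (Fin 2) (Fin 2) ℂ)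
    (hσ₂ : σ₂ = !![0, -Complex.I; Complex.I, 0])
    (hσ₃ : σ₃ = !![1, 0; 0, -1])
    (hL : L = Complex.I • σ₂) (hH : H = σ₃)
    (hG : G = (-(1/2 : ℂ)) • (Lᴴ * L) - Complex.I • H) :
    G = (-(1/2 : ℂ)) • (1 : Matrix (Fin 2) (Fin 2) ℂ) - Complex.I • σ₃ ∧
    Lᴴ = -L ∧
    (∀ ξ : Fin 2 → ℂ, ξ ≠ 0 → SxiOne G L ξ = ⊤) ∧
    (∀ V : Submodule ℂ (Fin 2 → ℂ),
      (∀ v ∈ V, G *ᵥ v ∈ V) → (∀ v ∈ V, L *ᵥ v ∈ V) → V = ⊥ ∨ V = ⊤) := by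
  have hL_eq : L = !![0, 1; -1, 0] := by
    ext i j; fin_cases i <;> fin_cases j <;> simp [hL, hσ₂]
  have hL_adj : Lᴴ = -L := by
    ext i j; fin_cases i <;> fin_cases j <;> simp [hL_eq]
  have hG_eq : G = (-(1/2 : ℂ)) • (1 : Matrix (Fin 2) (Fin 2) ℂ) - Complex.I • σ₃ := by
    rw [hG, hH, hL_adj, neg_mul, hL_eq]
    ext i j; fin_cases i <;> fin_cases j <;> simp
  have hG_diag : G = !![-(1/2) - Complex.I, 0; 0, -(1/2) + Complex.I] := by
    ext i j; fin_cases i <;> fin_cases j <;> simp [hG_eq, hσ₃]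
  have hGL : G * L - L * G = !![0, -2 * Complex.I; -2 * Complex.I, 0] := by
    rw [hG_diag, hL_eq]
    ext i j; fin_cases i <;> fin_cases j <;> simp <;> ring
  have hdet : (L * (G * L - L * G) - (G * L - L * G) * L).det ≠ 0 := by
    rw [hGL, hL_eq]
    simp [det_fin_two]
    ring_nf
    simp
  refine ⟨hG_eq, hL_adj, fun ξ hξ => ?_, fun V hGV hLV => ?_⟩
  · exact Submodule.eq_top_of_commutator_det_ne_zero hdet hξ (self_mem_SxiOne G L ξ)
      (deltaG_mulVec_mem_SxiOne G L ξ 0) (deltaG_mulVec_mem_SxiOne G L ξ 1)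
  · refine or_iff_not_imp_left.2 fun hV => ?_
    obtain ⟨ξ, hξV, hξ⟩ := Submodule.exists_mem_ne_zero_of_ne_bot hV
    exact Submodule.eq_top_of_commutator_det_ne_zero hdet hξ hξV (hLV ξ hξV)
      (Submodule.commutator_mulVec_mem hGV hLV hξV)
end

section
/- Let L and G be the explicit 3×3 matrices L = [[0,1,0],[−1,0,0],[0,0,0]] and G = [[−1/2,0,−1],[0,−1/2,0],[1,0,0]]. Then the only subspaces of ℂ³ invariant under both L and G are {0} and ℂ³; that is, the associated QMS is irreducible. -/
open Matrix

/-!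
The unital algebra generated by `G` and `L` is all of `M₃(ℂ)`, and a subspace invariant under
the full matrix algebra is trivial. Writing `eᵢ` for the standard basis and `Eᵢⱼ` for the
matrix units, `1 + L²` is the projection `E₂₂`; multiplying on the right by `G` and then `L`
gives `E₂₀` and `E₂₁`, and since `G e₂ = -e₀` and `L e₀ = -e₁`, left multiplication by `-G`
and then `-L` moves row `2` to rows `0` and `1`.
-/

namespace Submodule

variable {K n : Type*} [Field K] [Fintype n] [DecidableEq n]

def matrixStabilizer (V : Submodule K (n → K)) : Subalgebra K (Matrix n n K) where
  carrier := {A | ∀ v ∈ V, A *ᵥ v ∈ V}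
  mul_mem' {A B} hA hB v hv := by
    simpa only [← mulVec_mulVec] using hA _ (hB v hv)
  add_mem' {A B} hA hB v hv := by
    simpa only [add_mulVec] using V.add_mem (hA v hv) (hB v hv)
  algebraMap_mem' c v hv := by
    simpa only [Algebra.algebraMap_eq_smul_one, smul_mulVec, one_mulVec] using V.smul_mem c hv

theorem eq_bot_or_eq_top_of_matrixStabilizer_eq_top {V : Submodule K (n → K)}
    (hV : V.matrixStabilizer = ⊤) : V = ⊥ ∨ V = ⊤ := by
  refine or_iff_not_imp_left.mpr fun hbot => ?_
  obtain ⟨v, hvV, hv⟩ := V.exists_mem_ne_zero_of_ne_bot hbot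
  obtain ⟨j, hj⟩ := Function.ne_iff.mp hv
  have hsingle (i : n) : Pi.single i 1 ∈ V := by
    have := (hV ▸ Algebra.mem_top : single i j 1 ∈ V.matrixStabilizer) v hvV
    rwa [single_mulVec_eq, one_mul, smul_mem_iff _ hj] at this
  rw [eq_top_iff, ← (Pi.basisFun K n).span_eq, span_le]
  rintro _ ⟨i, rfl⟩
  simpa using hsingle i

theorem eq_bot_or_eq_top_of_adjoin_eq_top {S : Set (Matrix n n K)}
    (hS : Algebra.adjoin K S = ⊤) {V : Submodule K (n → K)}
    (hV : ∀ A ∈ S, ∀ v ∈ V, A *ᵥ v ∈ V) : V = ⊥ ∨ V = ⊤ :=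
  eq_bot_or_eq_top_of_matrixStabilizer_eq_top <| top_le_iff.mp <| hS ▸ Algebra.adjoin_le hV

end Submodule

namespace Matrix

variable {K n : Type*} [Field K] [Fintype n] [DecidableEq n]

theorem subalgebra_eq_top_of_forall_single_mem {A : Subalgebra K (Matrix n n K)}
    (h : ∀ i j, single i j 1 ∈ A) : A = ⊤ := by
  refine eq_top_iff.mpr fun M _ => ?_
  rw [matrix_eq_sum_single M]
  refine A.sum_mem fun i _ => A.sum_mem fun j _ => ?_
  simpa only [smul_single, smul_eq_mul, mul_one] using A.smul_mem (h i j) (M i j)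

end Matrix

namespace Example3x3

def L : Matrix (Fin 3) (Fin 3) ℂ := !![0, 1, 0; -1, 0, 0; 0, 0, 0]

noncomputable def G : Matrix (Fin 3) (Fin 3) ℂ := !![-1/2, 0, -1; 0, -1/2, 0; 1, 0, 0]

theorem one_add_L_mul_L : 1 + L * L = single 2 2 1 := by
  ext i j; fin_cases i <;> fin_cases j <;> simp [L, single]

theorem single_two_two_mul_G : single 2 2 1 * G = single 2 0 1 := by
  ext i j; fin_cases i <;> fin_cases j <;> simp [G, single, mul_apply]

theorem single_two_zero_mul_L : single 2 0 1 * L = single 2 1 1 := by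
  ext i j; fin_cases i <;> fin_cases j <;> simp [L, single, mul_apply]

theorem G_mul_single_two (j : Fin 3) : G * single 2 j 1 = -single 0 j 1 := by
  ext i k; fin_cases i <;> fin_cases k <;> simp [G, single, mul_apply, Fin.sum_univ_three, neg_ite]

theorem L_mul_single_zero (j : Fin 3) : L * single 0 j 1 = -single 1 j 1 := by
  ext i k; fin_cases i <;> fin_cases k <;> simp [L, single, mul_apply, Fin.sum_univ_three, neg_ite]

theorem adjoin_G_L_eq_top : Algebra.adjoin ℂ {G, L} = ⊤ := by
  set A := Algebra.adjoin ℂ {G, L}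
  have hG : G ∈ A := Algebra.subset_adjoin (by simp)
  have hL : L ∈ A := Algebra.subset_adjoin (by simp)
  have row_two (j : Fin 3) : single 2 j 1 ∈ A := by
    have h22 : single 2 2 1 ∈ A := one_add_L_mul_L ▸ A.add_mem A.one_mem (A.mul_mem hL hL)
    have h20 : single 2 0 1 ∈ A := single_two_two_mul_G ▸ A.mul_mem h22 hG
    have h21 : single 2 1 1 ∈ A := single_two_zero_mul_L ▸ A.mul_mem h20 hL
    fin_cases j <;> assumption
  have row_zero (j : Fin 3) : single 0 j 1 ∈ A := by
    simpa [G_mul_single_two] using A.neg_mem (A.mul_mem hG (row_two j))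
  have row_one (j : Fin 3) : single 1 j 1 ∈ A := by
    simpa [L_mul_single_zero] using A.neg_mem (A.mul_mem hL (row_zero j))
  refine subalgebra_eq_top_of_forall_single_mem fun i j => ?_
  fin_cases i
  exacts [row_zero j, row_one j, row_two j]

end Example3x3

/-- for the explicit `3×3` matrices
`L = [[0,1,0],[-1,0,0],[0,0,0]]` and `G = [[-1/2,0,-1],[0,-1/2,0],[1,0,0]]`,
the only subspaces of `ℂ³` invariant under both `L` and `G` are `{0}` and `ℂ³`;
that is, the associated QMS is irreducible. -/
theorem example_3x3_irreducible
    (L G : Matrix (Fin 3) (Fin 3) ℂ)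
    (hL : L = !![0, 1, 0; -1, 0, 0; 0, 0, 0])
    (hG : G = !![-1/2, 0, -1; 0, -1/2, 0; 1, 0, 0]) :
    ∀ V : Submodule ℂ (Fin 3 → ℂ),
      (∀ v ∈ V, G *ᵥ v ∈ V) → (∀ v ∈ V, L *ᵥ v ∈ V) → V = ⊥ ∨ V = ⊤ := by
  subst hL hG
  intro V hGV hLV
  refine Submodule.eq_bot_or_eq_top_of_adjoin_eq_top Example3x3.adjoin_G_L_eq_top ?_
  rintro A (rfl | rfl)
  exacts [hGV, hLV]
end
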